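/- The linear map φ : 𝒮̄^{1/2} → 𝒮̄⁰ defined on basis elements by L_m ↦ (1/2)L_{2m}, W_m ↦ W_{2m}, G_{m+1/2} ↦ (1/√2)G_{2m+1} is an injective homomorphism of Lie superalgebras. -/

import Mathlib

/-! Φ sends each basis vector to a nonzero multiple of a basis vector, `L_m ↦ L_{2m}`,
`W_m ↦ W_{2m}`, `G_{m+1/2} ↦ G_{2m+1}`, and distinct basis vectors to distinct ones, so it is
injective. Both sides of the homomorphism identity are bilinear, so it suffices to check it on
pairs of basis vectors, where it is a direct computation: the scalings work because
`(1/√2)² = 1/2` absorbs the factor 2 in `[G_{2m+1}, G_{2n+1}] = 2(m+n+1) W_{2(m+n+1)}`. -/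

/-- Basis of the Ramond-type algebra 𝒮̄⁰: `L m`, `W m` even, `G m` odd, `m ∈ ℤ`. -/
inductive B0 : Type
  | L : ℤ → B0
  | W : ℤ → B0
  | G : ℤ → B0
  deriving DecidableEq

/-- Basis of the Neveu–Schwarz-type algebra 𝒮̄^{1/2}: here `G n` stands for `G_{n+1/2}`. -/
inductive Bh : Type
  | L : ℤ → Bh
  | W : ℤ → Bh
  | G : ℤ → Bh
  deriving DecidableEq

open B0 in
/-- The bracket of 𝒮̄⁰ on basis elements. -/
noncomputable def br0 : B0 → B0 → (B0 →₀ ℂ)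
  | L m, L n => Finsupp.single (L (m + n)) ((n : ℂ) - m)
  | L m, W n => Finsupp.single (W (m + n)) ((m : ℂ) + n)
  | W n, L m => -Finsupp.single (W (m + n)) ((m : ℂ) + n)
  | L m, G n => Finsupp.single (G (m + n)) (n : ℂ)
  | G n, L m => -Finsupp.single (G (m + n)) (n : ℂ)
  | G m, G n => Finsupp.single (W (m + n)) ((m : ℂ) + n)
  | _, _ => 0

open Bh in
/-- The bracket of 𝒮̄^{1/2} on basis elements (`G n` = `G_{n+1/2}`). -/
noncomputable def brh : Bh → Bh → (Bh →₀ ℂ)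
  | L m, L n => Finsupp.single (L (m + n)) ((n : ℂ) - m)
  | L m, W n => Finsupp.single (W (m + n)) ((m : ℂ) + n)
  | W n, L m => -Finsupp.single (W (m + n)) ((m : ℂ) + n)
  | L m, G n => Finsupp.single (G (m + n)) ((n : ℂ) + 1/2)
  | G n, L m => -Finsupp.single (G (m + n)) ((n : ℂ) + 1/2)
  | G m, G n => Finsupp.single (W (m + n + 1)) ((m : ℂ) + n + 1)
  | _, _ => 0

/-- Bilinear extension of a basis-valued bracket to the whole free module. -/
noncomputable def bil {B : Type} (f : B → B → (B →₀ ℂ)) (v w : B →₀ ℂ) : B →₀ ℂ :=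
  v.sum fun a c => w.sum fun b d => (c * d) • f a b

open B0 Bh in
/-- The map φ on basis elements: `L_m ↦ (1/2)L_{2m}`, `W_m ↦ W_{2m}`,
`G_{m+1/2} ↦ (1/√2) G_{2m+1}`. -/
noncomputable def phib : Bh → (B0 →₀ ℂ)
  | Bh.L m => Finsupp.single (B0.L (2 * m)) (1/2 : ℂ)
  | Bh.W m => Finsupp.single (B0.W (2 * m)) 1
  | Bh.G m => Finsupp.single (B0.G (2 * m + 1)) ((Real.sqrt 2 : ℂ))⁻¹

/-- The linear extension Φ : 𝒮̄^{1/2} → 𝒮̄⁰ of φ. -/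
noncomputable def Phi (v : Bh →₀ ℂ) : B0 →₀ ℂ := v.sum fun b c => c • phib b

open Finsupp

section LinearCombination

variable {R ι κ : Type*} [Semiring R] {e : ι → κ}

theorem Finsupp.linearCombination_single_apply_of_injective (he : Function.Injective e)
    (k : ι → R) (v : ι →₀ R) (i : ι) :
    linearCombination R (fun j => single (e j) (k j)) v (e i) = v i * k i := by
  rw [linearCombination_apply, sum_apply, sum_eq_single i]
  · simp
  · intro j _ hji
    simp [he.ne hji]
  · simp

theorem Finsupp.linearCombination_single_injective [IsRightCancelMulZero R]
    (he : Function.Injective e) {k : ι → R} (hk : ∀ i, k i ≠ 0) :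
    Function.Injective (linearCombination R fun j => single (e j) (k j)) := by
  intro v w hvw
  ext i
  have := DFunLike.congr_fun hvw (e i)
  rw [linearCombination_single_apply_of_injective he,
    linearCombination_single_apply_of_injective he] at this
  exact mul_right_cancel₀ (hk i) this

end LinearCombination

section Bracket

variable {B B' : Type}

noncomputable def bilₗ (f : B → B → (B →₀ ℂ)) : (B →₀ ℂ) →ₗ[ℂ] (B →₀ ℂ) →ₗ[ℂ] (B →₀ ℂ) :=
  linearCombination ℂ fun a => linearCombination ℂ (f a)

theorem bil_eq_bilₗ (f : B → B → (B →₀ ℂ)) (v w : B →₀ ℂ) : bil f v w = bilₗ f v w := by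
  simp only [bil, bilₗ, linearCombination_apply, LinearMap.finsupp_sum_apply,
    LinearMap.smul_apply, smul_sum, mul_smul]

theorem bil_single_single (f : B → B → (B →₀ ℂ)) (a b : B) (c d : ℂ) :
    bil f (single a c) (single b d) = (c * d) • f a b := by
  simp [bil_eq_bilₗ, bilₗ, mul_smul]

theorem map_bil_of_map_bil_single (f : B → B → (B →₀ ℂ)) (f' : B' → B' → (B' →₀ ℂ))
    (g : (B →₀ ℂ) →ₗ[ℂ] (B' →₀ ℂ))
    (h : ∀ a b, g (f a b) = bil f' (g (single a 1)) (g (single b 1))) (v w : B →₀ ℂ) :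
    g (bil f v w) = bil f' (g v) (g w) := by
  simp only [bil_eq_bilₗ]
  suffices (bilₗ f).compr₂ g = (bilₗ f').compl₁₂ g g from
    LinearMap.congr_fun₂ this v w
  ext a b : 4
  simpa [bil_eq_bilₗ, bilₗ] using h a b

end Bracket

theorem Phi_eq_linearCombination : Phi = linearCombination ℂ phib := by
  ext1 v
  exact (linearCombination_apply ℂ v).symm

def phiIndex : Bh → B0
  | Bh.L m => B0.L (2 * m)
  | Bh.W m => B0.W (2 * m)
  | Bh.G m => B0.G (2 * m + 1)

noncomputable def phiCoeff : Bh → ℂ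
  | Bh.L _ => 1/2
  | Bh.W _ => 1
  | Bh.G _ => ((Real.sqrt 2 : ℂ))⁻¹

theorem phib_eq_single (b : Bh) : phib b = single (phiIndex b) (phiCoeff b) := by
  cases b <;> rfl

theorem phiIndex_injective : Function.Injective phiIndex := by
  intro a b h
  cases a <;> cases b <;> simp [phiIndex] at h ⊢ <;> omega

theorem phiCoeff_ne_zero (b : Bh) : phiCoeff b ≠ 0 := by
  cases b <;> simp [phiCoeff]

theorem inv_sqrt_two_mul_self : ((Real.sqrt 2 : ℂ))⁻¹ * ((Real.sqrt 2 : ℂ))⁻¹ = 1 / 2 := by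
  rw [← mul_inv, ← Complex.ofReal_mul, Real.mul_self_sqrt zero_le_two]
  norm_num

theorem linearCombination_phib_brh (a b : Bh) :
    linearCombination ℂ phib (brh a b) = bil br0 (phib a) (phib b) := by
  cases a <;> cases b <;>
    simp only [brh, phib, br0, bil_single_single, ← single_neg, linearCombination_single,
      smul_single, smul_eq_mul, smul_zero, map_zero, inv_sqrt_two_mul_self] <;>
    congr 1 <;> push_cast <;> ring_nf

/-- φ is an injective homomorphism of Lie superalgebras. -/
theorem stmt6 :
    Function.Injective Phi ∧ ∀ v w : Bh →₀ ℂ, Phi (bil brh v w) = bil br0 (Phi v) (Phi w) := by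
  rw [Phi_eq_linearCombination]
  refine ⟨?_, map_bil_of_map_bil_single brh br0 _ fun a b => ?_⟩
  · simpa only [funext phib_eq_single] using
      linearCombination_single_injective phiIndex_injective phiCoeff_ne_zero
  · simpa using linearCombination_phib_brh a b
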